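/- For every board B, d(B) = |B| − γ(B), where γ(B) is the minimum size of a dominating set of B under grid adjacency. -/

import Mathlib

/-- A cell of the square grid. -/
abbrev Cell : Type := ℤ × ℤ

/-- Two cells are adjacent iff they differ by 1 in exactly one coordinate. -/
def Adj (p q : Cell) : Prop := |p.1 - q.1| + |p.2 - q.2| = 1

/-- A board: a finite nonempty set of cells, each adjacent to another cell of the board. -/
def IsBoard (B : Set Cell) : Prop :=
  B.Finite ∧ B.Nonempty ∧ ∀ p ∈ B, ∃ q ∈ B, Adj p q

/-- A domino of `B`: a two-element subset of `B` whose cells are adjacent. -/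
def IsDomino (B : Set Cell) (e : Finset Cell) : Prop :=
  ∃ p q : Cell, p ∈ B ∧ q ∈ B ∧ Adj p q ∧ e = {p, q}

/-- A domino covering of `B`: a finite set of dominoes of `B` whose union is `B`. -/
def IsDominoCovering (B : Set Cell) (D : Finset (Finset Cell)) : Prop :=
  (∀ e ∈ D, IsDomino B e) ∧ (⋃ e ∈ D, (↑e : Set Cell)) = B

/-- A saturated domino covering: removing any domino leaves some cell uncovered. -/
def IsSaturatedCovering (B : Set Cell) (D : Finset (Finset Cell)) : Prop :=
  IsDominoCovering B D ∧ ∀ e ∈ D, (⋃ e' ∈ D.erase e, (↑e' : Set Cell)) ⊂ B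

/-- `dNum B` is the maximum number of dominoes in a saturated domino covering of `B`. -/
noncomputable def dNum (B : Set Cell) : ℕ :=
  sSup {k : ℕ | ∃ D : Finset (Finset Cell), IsSaturatedCovering B D ∧ D.card = k}

/-- The X-pentomino centered at `c`: the cell `c` together with its four adjacent cells. -/
def Xpent (c : Cell) : Set Cell :=
  {c, (c.1 + 1, c.2), (c.1 - 1, c.2), (c.1, c.2 + 1), (c.1, c.2 - 1)}

/-- A set of cells is connected under adjacency. -/
def ConnectedUnderAdj (F : Set Cell) : Prop :=
  ∀ p ∈ F, ∀ q ∈ F, Relation.ReflTransGen (fun a b => a ∈ F ∧ b ∈ F ∧ Adj a b) p q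

/-- A fragment: a connected subset of some X-pentomino with at least two cells. -/
def IsFragment (F : Set Cell) : Prop :=
  (∃ c : Cell, F ⊆ Xpent c) ∧ 2 ≤ F.ncard ∧ ConnectedUnderAdj F

/-- A fragment tiling of `B`: a partition of `B` into pairwise disjoint fragments. -/
def IsFragmentTiling (B : Set Cell) (T : Finset (Set Cell)) : Prop :=
  (∀ F ∈ T, IsFragment F) ∧
  (∀ F ∈ T, ∀ G ∈ T, F ≠ G → Disjoint F G) ∧
  (⋃ F ∈ T, F) = B

/-- `fNum B` is the minimum number of fragments in a fragment tiling of `B`. -/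
noncomputable def fNum (B : Set Cell) : ℕ :=
  sInf {k : ℕ | ∃ T : Finset (Set Cell), IsFragmentTiling B T ∧ T.card = k}

/-- `xNum B` is the minimum number of X-pentominoes (centered anywhere, allowed to
overlap and to extend outside `B`) whose union covers `B`. -/
noncomputable def xNum (B : Set Cell) : ℕ :=
  sInf {k : ℕ | ∃ C : Finset Cell, B ⊆ (⋃ c ∈ C, Xpent c) ∧ C.card = k}

/-- A dominating set of the board `B`: a subset `S ⊆ B` such that every cell of `B`
lies in `S` or is adjacent to some cell of `S`. -/
def IsDominatingSet (B : Set Cell) (S : Finset Cell) : Prop :=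
  ↑S ⊆ B ∧ ∀ p ∈ B, p ∈ S ∨ ∃ q ∈ S, Adj p q

/-- `γ(B)`: the minimum size of a dominating set of `B`. -/
noncomputable def gammaNum (B : Set Cell) : ℕ :=
  sInf {k : ℕ | ∃ S : Finset Cell, IsDominatingSet B S ∧ S.card = k}

/-!
A saturated covering `D` gives every domino a private cell, covered by no other domino; the
cells that are not private dominate the board (the partner of a private cell is not private),
so `|D| ≤ |B| - γ(B)`. Conversely, let `S` be a minimum dominating set and send each cell
outside `S` to an adjacent cell of `S`, choosing the assignment so that as many cells of `S`
as possible are hit. Every cell of `S` is then hit: otherwise a neighbour of an unhit cell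
either lets us drop a cell from `S`, or can be reassigned to it, or can replace two cells
of `S`. Pairing each cell outside `S` with its assigned cell then gives a saturated covering
with `|B| - γ(B)` dominoes.
-/

lemma Adj.symm {p q : Cell} (h : Adj p q) : Adj q p := by
  rwa [Adj, abs_sub_comm q.1, abs_sub_comm q.2]

lemma Adj.ne {p q : Cell} (h : Adj p q) : p ≠ q := by
  rintro rfl
  simp [Adj] at h

lemma IsDomino.subset {B : Set Cell} {e : Finset Cell} (he : IsDomino B e) : ↑e ⊆ B := by
  obtain ⟨a, c, ha, hc, -, rfl⟩ := he
  simp [Set.insert_subset_iff, ha, hc]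

lemma IsDomino.exists_adj {B : Set Cell} {e : Finset Cell} (he : IsDomino B e) {x : Cell}
    (hx : x ∈ e) : ∃ y ∈ e, Adj x y := by
  obtain ⟨a, c, -, -, hac, rfl⟩ := he
  rcases Finset.mem_insert.mp hx with rfl | hx
  · exact ⟨c, by simp, hac⟩
  · rw [Finset.mem_singleton.mp hx]
    exact ⟨a, by simp, hac.symm⟩

lemma gammaNum_le_card {B : Set Cell} {T : Finset Cell} (hT : IsDominatingSet B T) :
    gammaNum B ≤ T.card := by
  unfold gammaNum
  exact Nat.sInf_le ⟨T, hT, rfl⟩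

lemma exists_isDominatingSet_card_eq_gammaNum (b : Finset Cell) :
    ∃ S, IsDominatingSet ↑b S ∧ S.card = gammaNum ↑b := by
  unfold gammaNum
  exact Nat.sInf_mem (s := {k | ∃ S, IsDominatingSet ↑b S ∧ S.card = k})
    ⟨b.card, b, ⟨subset_rfl, fun _ hp => Or.inl hp⟩, rfl⟩

open Finset

section UpperBound

variable {b : Finset Cell} {D : Finset (Finset Cell)}

lemma IsSaturatedCovering.exists_private_cell (hD : IsSaturatedCovering ↑b D)
    {e : Finset Cell} (he : e ∈ D) : ∃ x ∈ e, ∀ e' ∈ D, x ∈ e' → e' = e := by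
  obtain ⟨x, hxb, hx⟩ := Set.exists_of_ssubset (hD.2 e he)
  have key : ∀ e' ∈ D, x ∈ e' → e' = e := fun e' he' hxe' => by
    by_contra hne
    exact hx (Set.mem_biUnion (mem_erase.mpr ⟨hne, he'⟩) hxe')
  rw [← hD.1.2] at hxb
  obtain ⟨e₀, he₀, hxe₀⟩ := Set.mem_iUnion₂.mp hxb
  exact ⟨x, key e₀ he₀ hxe₀ ▸ hxe₀, key⟩

lemma IsSaturatedCovering.card_add_gammaNum_le (hD : IsSaturatedCovering ↑b D) :
    D.card + gammaNum ↑b ≤ b.card := by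
  classical
  choose! p hpe hpriv using fun e (he : e ∈ D) => hD.exists_private_cell he
  have hinj : Set.InjOn p D := fun e he e' he' h => hpriv e' he' e he (h ▸ hpe e he)
  have himg : D.image p ⊆ b :=
    image_subset_iff.mpr fun e he => (hD.1.1 e he).subset (hpe e he)
  have hdom : IsDominatingSet ↑b (b \ D.image p) := by
    refine ⟨by simp, fun x hx => ?_⟩
    by_cases hxp : x ∈ D.image p
    · obtain ⟨e, he, rfl⟩ := mem_image.mp hxp
      obtain ⟨y, hye, hxy⟩ := (hD.1.1 e he).exists_adj (hpe e he)
      refine Or.inr ⟨y, mem_sdiff.mpr ⟨(hD.1.1 e he).subset hye, fun hyp => hxy.ne ?_⟩, hxy⟩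
      obtain ⟨e', he', rfl⟩ := mem_image.mp hyp
      rw [hpriv e' he' e he hye]
    · exact Or.inl (mem_sdiff.mpr ⟨hx, hxp⟩)
  have hγ := gammaNum_le_card hdom
  rw [card_sdiff_of_subset himg, card_image_of_injOn hinj] at hγ
  have := card_le_card himg
  rw [card_image_of_injOn hinj] at this
  omega

end UpperBound

lemma insert_image_subset_image_update {α β : Type*} [DecidableEq α] [DecidableEq β]
    {A : Finset α} {f : α → β} {u x : α} (y : β) (hu : u ∈ A) (hx : x ∈ A) (hxu : x ≠ u)
    (hfx : f x = f u) : insert y (A.image f) ⊆ A.image (Function.update f u y) := by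
  refine insert_subset_iff.mpr ⟨mem_image.mpr ⟨u, hu, by simp⟩, fun z hz => ?_⟩
  obtain ⟨v, hv, rfl⟩ := mem_image.mp hz
  by_cases hvu : v = u
  · exact mem_image.mpr ⟨x, hx, by simp [Function.update_of_ne hxu, hfx, hvu]⟩
  · exact mem_image.mpr ⟨v, hv, Function.update_of_ne hvu _ _⟩

section LowerBound

variable {b S : Finset Cell} {g : Cell → Cell}

def IsStarAssignment (b S : Finset Cell) (g : Cell → Cell) : Prop :=
  ∀ v ∈ b \ S, g v ∈ S ∧ Adj v (g v)

lemma exists_isStarAssignment (hS : IsDominatingSet ↑b S) : ∃ g, IsStarAssignment b S g := by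
  have : ∀ v, ∃ q, v ∈ b \ S → q ∈ S ∧ Adj v q := fun v => by
    by_cases hv : v ∈ b \ S
    · obtain ⟨hvb, hvS⟩ := mem_sdiff.mp hv
      obtain ⟨q, hq, hvq⟩ := (hS.2 v hvb).resolve_left hvS
      exact ⟨q, fun _ => ⟨hq, hvq⟩⟩
    · exact ⟨v, fun h => absurd h hv⟩
  choose g hg using this
  exact ⟨g, hg⟩

namespace IsStarAssignment

lemma image_subset (hg : IsStarAssignment b S g) : (b \ S).image g ⊆ S :=
  image_subset_iff.mpr fun v hv => (hg v hv).1

lemma eq_of_mem_pair (hg : IsStarAssignment b S g) {v w : Cell} (hv : v ∈ b \ S)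
    (hw : w ∈ b \ S) (h : v ∈ ({w, g w} : Finset Cell)) : v = w := by
  rcases mem_insert.mp h with h | h
  · exact h
  · exact absurd (mem_singleton.mp h ▸ (hg w hw).1) (mem_sdiff.mp hv).2

lemma update (hg : IsStarAssignment b S g) {u s : Cell} (hs : s ∈ S) (hus : Adj u s) :
    IsStarAssignment b S (Function.update g u s) := fun v hv => by
  by_cases hvu : v = u
  · subst hvu
    simpa using ⟨hs, hus⟩
  · simpa [Function.update_of_ne hvu] using hg v hv

/-- The domino `{v, g v}` is the only one containing `v`, so the covering is saturated. -/
lemma exists_saturatedCovering (hg : IsStarAssignment b S g) (hSb : S ⊆ b)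
    (hsurj : S ⊆ (b \ S).image g) :
    ∃ D, IsSaturatedCovering ↑b D ∧ D.card = (b \ S).card := by
  classical
  set D := (b \ S).image fun v => ({v, g v} : Finset Cell)
  have hinj : Set.InjOn (fun v => ({v, g v} : Finset Cell)) ↑(b \ S) :=
    fun v hv w hw h => hg.eq_of_mem_pair hv hw <| by
      rw [← show ({v, g v} : Finset Cell) = {w, g w} from h]
      exact mem_insert_self _ _
  have hdom : ∀ e ∈ D, IsDomino ↑b e := by
    simp only [D, mem_image]
    rintro e ⟨v, hv, rfl⟩
    exact ⟨v, g v, (mem_sdiff.mp hv).1, hSb (hg v hv).1, (hg v hv).2, rfl⟩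
  have hsub : ∀ D' ⊆ D, (⋃ e ∈ D', (↑e : Set Cell)) ⊆ ↑b :=
    fun D' hD' => Set.iUnion₂_subset fun e he => (hdom e (hD' he)).subset
  have hcov : (⋃ e ∈ D, (↑e : Set Cell)) = ↑b := by
    refine (hsub D subset_rfl).antisymm fun x hx => Set.mem_iUnion₂.mpr ?_
    by_cases hxS : x ∈ S
    · obtain ⟨v, hv, rfl⟩ := mem_image.mp (hsurj hxS)
      exact ⟨{v, g v}, mem_image_of_mem _ hv, by simp⟩
    · exact ⟨{x, g x}, mem_image_of_mem _ (mem_sdiff.mpr ⟨hx, hxS⟩), by simp⟩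
  refine ⟨D, ⟨⟨hdom, hcov⟩, fun e he => ?_⟩, card_image_of_injOn hinj⟩
  obtain ⟨v, hv, rfl⟩ := mem_image.mp he
  refine (Set.ssubset_iff_of_subset (hsub _ (erase_subset _ _))).mpr
    ⟨v, (mem_sdiff.mp hv).1, fun hvD => ?_⟩
  obtain ⟨e', he', hve'⟩ := Set.mem_iUnion₂.mp hvD
  obtain ⟨hne, he'D⟩ := mem_erase.mp he'
  obtain ⟨w, hw, rfl⟩ := mem_image.mp he'D
  exact hne (by rw [hg.eq_of_mem_pair hv hw hve'])

variable {s u : Cell}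

lemma exists_smaller_of_adj_mem (hg : IsStarAssignment b S g) (hSb : S ⊆ b)
    (hs : s ∈ S) (hsg : s ∉ (b \ S).image g) (hu : u ∈ S) (hsu : Adj s u) :
    ∃ T, IsDominatingSet ↑b T ∧ T.card < S.card := by
  refine ⟨S.erase s, ⟨coe_subset.mpr ((erase_subset s S).trans hSb), fun p hp => ?_⟩,
    card_erase_lt_of_mem hs⟩
  by_cases hpS : p ∈ S
  · by_cases hps : p = s
    · exact Or.inr ⟨u, mem_erase.mpr ⟨hsu.ne.symm, hu⟩, hps ▸ hsu⟩
    · exact Or.inl (mem_erase.mpr ⟨hps, hpS⟩)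
  · have hp : p ∈ b \ S := mem_sdiff.mpr ⟨hp, hpS⟩
    refine Or.inr ⟨g p, mem_erase.mpr ⟨?_, (hg p hp).1⟩, (hg p hp).2⟩
    rintro hgp
    exact hsg (hgp ▸ mem_image_of_mem g hp)

/-- If `u` is the only cell attached to `g u`, then `u` can replace both `s` and `g u`. -/
lemma exists_smaller_of_adj_sole (hg : IsStarAssignment b S g) (hSb : S ⊆ b)
    (hs : s ∈ S) (hsg : s ∉ (b \ S).image g) (hu : u ∈ b \ S) (hsu : Adj s u)
    (hsole : ∀ x ∈ b \ S, g x = g u → x = u) :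
    ∃ T, IsDominatingSet ↑b T ∧ T.card < S.card := by
  have hgu : g u ∈ S.erase s :=
    mem_erase.mpr ⟨fun h => hsg (h ▸ mem_image_of_mem g hu), (hg u hu).1⟩
  refine ⟨insert u ((S.erase s).erase (g u)), ⟨?_, fun p hp => ?_⟩, ?_⟩
  · simp only [coe_insert, Set.insert_subset_iff]
    exact ⟨(mem_sdiff.mp hu).1,
      coe_subset.mpr (((erase_subset _ _).trans (erase_subset _ _)).trans hSb)⟩
  · by_cases hpu : p = u
    · exact Or.inl (hpu ▸ mem_insert_self _ _)
    by_cases hpS : p ∈ S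
    · by_cases hps : p = s
      · exact Or.inr ⟨u, mem_insert_self _ _, hps ▸ hsu⟩
      by_cases hpg : p = g u
      · exact Or.inr ⟨u, mem_insert_self _ _, hpg ▸ (hg u hu).2.symm⟩
      exact Or.inl (mem_insert_of_mem (mem_erase.mpr ⟨hpg, mem_erase.mpr ⟨hps, hpS⟩⟩))
    · have hp : p ∈ b \ S := mem_sdiff.mpr ⟨hp, hpS⟩
      refine Or.inr ⟨g p, mem_insert_of_mem (mem_erase.mpr ⟨fun h => hpu (hsole p hp h),
        mem_erase.mpr ⟨fun h => hsg (h ▸ mem_image_of_mem g hp), (hg p hp).1⟩⟩), (hg p hp).2⟩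
  · calc (insert u ((S.erase s).erase (g u))).card
        ≤ ((S.erase s).erase (g u)).card + 1 := card_insert_le _ _
      _ < S.card := by
        rw [card_erase_of_mem hgu, card_erase_of_mem hs]
        have := card_pos.mpr ⟨s, hs⟩
        have := card_pos.mpr ⟨g u, hgu⟩
        rw [card_erase_of_mem hs] at this
        omega

end IsStarAssignment

end LowerBound

lemma IsDominatingSet.exists_isStarAssignment_surjective {b S : Finset Cell}
    (hadj : ∀ p ∈ b, ∃ q ∈ b, Adj p q) (hS : IsDominatingSet ↑b S)
    (hmin : ∀ T, IsDominatingSet ↑b T → S.card ≤ T.card) :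
    ∃ g, IsStarAssignment b S g ∧ S ⊆ (b \ S).image g := by
  classical
  set K := {k | ∃ g, IsStarAssignment b S g ∧ ((b \ S).image g).card = k}
  have hK : BddAbove K := ⟨S.card, by
    rintro k ⟨g, hg, rfl⟩
    exact card_le_card hg.image_subset⟩
  obtain ⟨g₀, hg₀⟩ := exists_isStarAssignment hS
  obtain ⟨g, hg, hgK⟩ := Nat.sSup_mem (s := K) ⟨_, g₀, hg₀, rfl⟩ hK
  have hmax : ∀ g', IsStarAssignment b S g' →
      ((b \ S).image g').card ≤ ((b \ S).image g).card :=
    fun g' hg' => hgK ▸ le_csSup hK ⟨g', hg', rfl⟩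
  refine ⟨g, hg, fun s hs => ?_⟩
  by_contra hsg
  have hSb : S ⊆ b := coe_subset.mp hS.1
  obtain ⟨u, hub, hsu⟩ := hadj s (hSb hs)
  have hsmaller : ¬ ∃ T, IsDominatingSet ↑b T ∧ T.card < S.card := by
    rintro ⟨T, hT, hlt⟩
    exact (hmin T hT).not_gt hlt
  by_cases huS : u ∈ S
  · exact hsmaller (hg.exists_smaller_of_adj_mem hSb hs hsg huS hsu)
  have hu : u ∈ b \ S := mem_sdiff.mpr ⟨hub, huS⟩
  by_cases hshared : ∃ x ∈ b \ S, x ≠ u ∧ g x = g u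
  · obtain ⟨x, hx, hxu, hgx⟩ := hshared
    have hmore := card_le_card (insert_image_subset_image_update s hu hx hxu hgx)
    rw [card_insert_of_notMem hsg] at hmore
    have hle := hmax _ (hg.update hs hsu.symm)
    omega
  · exact hsmaller (hg.exists_smaller_of_adj_sole hSb hs hsg hu hsu
      fun x hx hgx => by_contra fun hxu => hshared ⟨x, hx, hxu, hgx⟩)

lemma exists_saturatedCovering_card_eq {b : Finset Cell} (hadj : ∀ p ∈ b, ∃ q ∈ b, Adj p q) :
    ∃ D, IsSaturatedCovering ↑b D ∧ D.card = b.card - gammaNum ↑b := by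
  obtain ⟨S, hS, hSγ⟩ := exists_isDominatingSet_card_eq_gammaNum b
  have hSb : S ⊆ b := coe_subset.mp hS.1
  obtain ⟨g, hg, hsurj⟩ :=
    hS.exists_isStarAssignment_surjective hadj fun T hT => hSγ ▸ gammaNum_le_card hT
  obtain ⟨D, hD, hcard⟩ := hg.exists_saturatedCovering hSb hsurj
  exact ⟨D, hD, by rw [hcard, card_sdiff_of_subset hSb, hSγ]⟩

/-- For every board `B`, `d(B) = |B| − γ(B)`. -/
theorem dNum_eq_card_sub_gamma (B : Set Cell) (hB : IsBoard B) :
    dNum B = B.ncard - gammaNum B := by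
  obtain ⟨⟨b, rfl⟩, -, hadj⟩ := And.imp_left Set.Finite.exists_finset_coe hB
  rw [Set.ncard_coe_finset]
  obtain ⟨D, hD, hcard⟩ := exists_saturatedCovering_card_eq hadj
  refine IsGreatest.csSup_eq ⟨⟨D, hD, hcard⟩, ?_⟩
  rintro k ⟨D', hD', rfl⟩
  have := hD'.card_add_gammaNum_le
  omega
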